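/- For a multiplicative n-Hom Lie superalgebra N, the quasicentroid QC(N) is closed under the Jordan product D • E = ½(DE + (−1)^{|D||E|}ED): if D is a homogeneous α^k-quasicentroid element of degree ξ and E a homogeneous α^s-quasicentroid element of degree η, then D • E is an α^{k+s}-quasicentroid element of degree ξ+η; consequently (QC(N), •, α̃) is a Hom-Jordan superalgebra. -/
import Mathlib


open scoped BigOperators

noncomputable section

variable {𝔽 : Type*} [Field 𝔽]
variable {N : Type*} [AddCommGroup N] [Module 𝔽 N]

/-- The sign `(-1)^g` for `g : ZMod 2`. -/
def sgn (𝔽 : Type*) [Field 𝔽] (g : ZMod 2) : 𝔽 := if g = 0 then 1 else -1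

/-- `|X_{i-1}|` : the sum of the degrees `d j` for `j < i`. -/
def psum {m : ℕ} (d : Fin m → ZMod 2) (i : Fin m) : ZMod 2 :=
  ∑ j ∈ Finset.univ.filter (fun j => j < i), d j

/-- `D` is homogeneous of degree `ξ` with respect to the `ℤ₂`-grading `gr`. -/
def Homog (gr : ZMod 2 → Submodule 𝔽 N) (ξ : ZMod 2) (D : N →ₗ[𝔽] N) : Prop :=
  ∀ g : ZMod 2, ∀ x ∈ gr g, D x ∈ gr (g + ξ)

/-- `(N, br, α)` is a multiplicative `n`-Hom Lie superalgebra, where `n = m + 1`: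
`N = N₀ ⊕ N₁` is `ℤ₂`-graded, the `n`-multilinear bracket `br` is even (adds degrees),
super skew-symmetric in adjacent arguments, `α` is even, multiplicative, and the super
Hom-Jacobi identity holds. -/
structure IsMNHLS {m : ℕ} (gr : ZMod 2 → Submodule 𝔽 N)
    (br : MultilinearMap 𝔽 (fun _ : Fin (m + 1) => N) N) (α : N →ₗ[𝔽] N) : Prop where
  internal : DirectSum.IsInternal gr
  alpha_even : ∀ g : ZMod 2, ∀ x ∈ gr g, α x ∈ gr g
  br_deg : ∀ (d : Fin (m + 1) → ZMod 2) (x : Fin (m + 1) → N),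
      (∀ i, x i ∈ gr (d i)) → br x ∈ gr (∑ i, d i)
  skew : ∀ (d : Fin (m + 1) → ZMod 2) (x : Fin (m + 1) → N),
      (∀ i, x i ∈ gr (d i)) → ∀ i j : Fin (m + 1), (i : ℕ) + 1 = (j : ℕ) →
      br x = -sgn 𝔽 (d i * d j) • br (x ∘ Equiv.swap i j)
  alpha_br : ∀ x : Fin (m + 1) → N, α (br x) = br fun i => α (x i)
  jacobi : ∀ (dx : Fin m → ZMod 2) (x : Fin m → N)
      (dy : Fin (m + 1) → ZMod 2) (y : Fin (m + 1) → N),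
      (∀ i, x i ∈ gr (dx i)) → (∀ i, y i ∈ gr (dy i)) →
      br (Fin.snoc (fun i => α (x i)) (br y)) =
        ∑ i : Fin (m + 1), sgn 𝔽 ((∑ j, dx j) * psum dy i) •
          br (Function.update (fun j => α (y j)) i (br (Fin.snoc x (y i))))

/-- `D` is a homogeneous `α^k`-derivation of degree `ξ`. -/
def IsDer {m : ℕ} (gr : ZMod 2 → Submodule 𝔽 N)
    (br : MultilinearMap 𝔽 (fun _ : Fin (m + 1) => N) N) (α : N →ₗ[𝔽] N)
    (k : ℕ) (ξ : ZMod 2) (D : N →ₗ[𝔽] N) : Prop :=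
  Homog gr ξ D ∧ D ∘ₗ α = α ∘ₗ D ∧
    ∀ (d : Fin (m + 1) → ZMod 2) (x : Fin (m + 1) → N), (∀ i, x i ∈ gr (d i)) →
      D (br x) = ∑ i : Fin (m + 1), sgn 𝔽 (ξ * psum d i) •
        br (Function.update (fun j => (α ^ k) (x j)) i (D (x i)))

/-- `D` is a homogeneous `α^k`-quasiderivation of degree `ξ` with associated map `D'`. -/
def IsQDerWith {m : ℕ} (gr : ZMod 2 → Submodule 𝔽 N)
    (br : MultilinearMap 𝔽 (fun _ : Fin (m + 1) => N) N) (α : N →ₗ[𝔽] N)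
    (k : ℕ) (ξ : ZMod 2) (D D' : N →ₗ[𝔽] N) : Prop :=
  Homog gr ξ D ∧ D ∘ₗ α = α ∘ₗ D ∧ Homog gr ξ D' ∧ D' ∘ₗ α = α ∘ₗ D' ∧
    ∀ (d : Fin (m + 1) → ZMod 2) (x : Fin (m + 1) → N), (∀ i, x i ∈ gr (d i)) →
      (∑ i : Fin (m + 1), sgn 𝔽 (ξ * psum d i) •
        br (Function.update (fun j => (α ^ k) (x j)) i (D (x i)))) = D' (br x)

/-- `D` is a homogeneous `α^k`-quasiderivation of degree `ξ`. -/
def IsQDer {m : ℕ} (gr : ZMod 2 → Submodule 𝔽 N)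
    (br : MultilinearMap 𝔽 (fun _ : Fin (m + 1) => N) N) (α : N →ₗ[𝔽] N)
    (k : ℕ) (ξ : ZMod 2) (D : N →ₗ[𝔽] N) : Prop :=
  ∃ D' : N →ₗ[𝔽] N, IsQDerWith gr br α k ξ D D'

/-- `D` is a homogeneous generalized `α^k`-derivation of degree `ξ`:
there are `D⁽¹⁾, …, D⁽ⁿ⁾` (here `DD i` for positions `i = 1, …, n-1`, with `DD 0 = D`,
and `Dn = D⁽ⁿ⁾`) all homogeneous of degree `ξ` and commuting with `α`, satisfying the
defining identity. -/
def IsGDer {m : ℕ} (gr : ZMod 2 → Submodule 𝔽 N)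
    (br : MultilinearMap 𝔽 (fun _ : Fin (m + 1) => N) N) (α : N →ₗ[𝔽] N)
    (k : ℕ) (ξ : ZMod 2) (D : N →ₗ[𝔽] N) : Prop :=
  Homog gr ξ D ∧ D ∘ₗ α = α ∘ₗ D ∧
    ∃ (DD : Fin (m + 1) → (N →ₗ[𝔽] N)) (Dn : N →ₗ[𝔽] N),
      DD 0 = D ∧ (∀ i, Homog gr ξ (DD i)) ∧ (∀ i, DD i ∘ₗ α = α ∘ₗ DD i) ∧
      Homog gr ξ Dn ∧ Dn ∘ₗ α = α ∘ₗ Dn ∧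
      ∀ (d : Fin (m + 1) → ZMod 2) (x : Fin (m + 1) → N), (∀ i, x i ∈ gr (d i)) →
        (∑ i : Fin (m + 1), sgn 𝔽 (ξ * psum d i) •
          br (Function.update (fun j => (α ^ k) (x j)) i (DD i (x i)))) = Dn (br x)

/-- `D` is a homogeneous `α^k`-centroid element of degree `ξ`. -/
def IsCent {m : ℕ} (gr : ZMod 2 → Submodule 𝔽 N)
    (br : MultilinearMap 𝔽 (fun _ : Fin (m + 1) => N) N) (α : N →ₗ[𝔽] N)
    (k : ℕ) (ξ : ZMod 2) (D : N →ₗ[𝔽] N) : Prop :=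
  Homog gr ξ D ∧ D ∘ₗ α = α ∘ₗ D ∧
    ∀ (d : Fin (m + 1) → ZMod 2) (x : Fin (m + 1) → N), (∀ i, x i ∈ gr (d i)) →
      (∀ i : Fin (m + 1),
        br (Function.update (fun j => (α ^ k) (x j)) 0 (D (x 0))) =
          sgn 𝔽 (ξ * psum d i) •
            br (Function.update (fun j => (α ^ k) (x j)) i (D (x i)))) ∧
      br (Function.update (fun j => (α ^ k) (x j)) 0 (D (x 0))) = D (br x)

/-- `D` is a homogeneous `α^k`-quasicentroid element of degree `ξ`. -/
def IsQCent {m : ℕ} (gr : ZMod 2 → Submodule 𝔽 N)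
    (br : MultilinearMap 𝔽 (fun _ : Fin (m + 1) => N) N) (α : N →ₗ[𝔽] N)
    (k : ℕ) (ξ : ZMod 2) (D : N →ₗ[𝔽] N) : Prop :=
  Homog gr ξ D ∧ D ∘ₗ α = α ∘ₗ D ∧
    ∀ (d : Fin (m + 1) → ZMod 2) (x : Fin (m + 1) → N), (∀ i, x i ∈ gr (d i)) →
      ∀ i : Fin (m + 1),
        br (Function.update (fun j => (α ^ k) (x j)) 0 (D (x 0))) =
          sgn 𝔽 (ξ * psum d i) •
            br (Function.update (fun j => (α ^ k) (x j)) i (D (x i)))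

/-- `D` is a homogeneous `α^k`-center derivation of degree `ξ`. -/
def IsZDer {m : ℕ} (gr : ZMod 2 → Submodule 𝔽 N)
    (br : MultilinearMap 𝔽 (fun _ : Fin (m + 1) => N) N) (α : N →ₗ[𝔽] N)
    (k : ℕ) (ξ : ZMod 2) (D : N →ₗ[𝔽] N) : Prop :=
  Homog gr ξ D ∧ D ∘ₗ α = α ∘ₗ D ∧
    ∀ (d : Fin (m + 1) → ZMod 2) (x : Fin (m + 1) → N), (∀ i, x i ∈ gr (d i)) →
      br (Function.update (fun j => (α ^ k) (x j)) 0 (D (x 0))) = 0 ∧ D (br x) = 0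

/-- The center `Z(N) = {x : [x, y₂, …, yₙ] = 0}`. -/
def center {m : ℕ} (br : MultilinearMap 𝔽 (fun _ : Fin (m + 1) => N) N) :
    Submodule 𝔽 N where
  carrier := {x | ∀ y : Fin (m + 1) → N, br (Function.update y 0 x) = 0}
  add_mem' := by
    intro a b ha hb y
    rw [MultilinearMap.map_update_add, ha y, hb y, add_zero]
  zero_mem' := by
    intro y
    exact br.map_update_zero y 0
  smul_mem' := by
    intro c a ha y
    rw [MultilinearMap.map_update_smul, ha y, smul_zero]

/-- The Jordan product `D • E = ½(DE + (-1)^{|D||E|} ED)` of operators of degrees `ξ, η`. -/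
def jprod (𝔽 : Type*) [Field 𝔽] {N : Type*} [AddCommGroup N] [Module 𝔽 N]
    (ξ η : ZMod 2) (D E : N →ₗ[𝔽] N) : N →ₗ[𝔽] N :=
  (2 : 𝔽)⁻¹ • (D ∘ₗ E + sgn 𝔽 (ξ * η) • (E ∘ₗ D))

/-- The Hom-associator of the Jordan product with respect to `α̃(u) = α ∘ u`, where
`x, y, z` have degrees `a, b, c`. -/
def jassoc (𝔽 : Type*) [Field 𝔽] {N : Type*} [AddCommGroup N] [Module 𝔽 N]
    (α : N →ₗ[𝔽] N) (a b c : ZMod 2) (x y z : N →ₗ[𝔽] N) : N →ₗ[𝔽] N :=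
  jprod 𝔽 (a + b) c (jprod 𝔽 a b x y) (α ∘ₗ z) -
    jprod 𝔽 a (b + c) (α ∘ₗ x) (jprod 𝔽 b c y z)

/-- The bracket subalgebra `[N, …, N]`, the span of all brackets. -/
def brSub {m : ℕ} (br : MultilinearMap 𝔽 (fun _ : Fin (m + 1) => N) N) :
    Submodule 𝔽 N :=
  Submodule.span 𝔽 (Set.range fun x : Fin (m + 1) → N => br x)

/-- The bracket of `Ň = Nt + Ntⁿ` (modelled as `N × N`, first coordinate the coefficient
of `t`, second the coefficient of `tⁿ`): `[x₁t, …, xₙt] = [x₁, …, xₙ]tⁿ` and every bracket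
involving a `tⁿ`-term vanishes. -/
def checkBr {m : ℕ} (br : MultilinearMap 𝔽 (fun _ : Fin (m + 1) => N) N) :
    MultilinearMap 𝔽 (fun _ : Fin (m + 1) => N × N) (N × N) :=
  (LinearMap.inr 𝔽 N N).compMultilinearMap
    (br.compLinearMap fun _ => LinearMap.fst 𝔽 N N)

/-- The grading of `Ň = Nt + Ntⁿ`. -/
def checkGr (gr : ZMod 2 → Submodule 𝔽 N) (g : ZMod 2) : Submodule 𝔽 (N × N) :=
  (gr g).prod (gr g)

/-- The map `φ(D) : Ň → Ň`, `φ(D)(at + utⁿ + btⁿ) = D(a)t + D'(b)tⁿ`, where `π` is the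
projection of `N` onto `[N, …, N]` along `U`. -/
def phiMap (D D' π : N →ₗ[𝔽] N) : N × N →ₗ[𝔽] N × N :=
  LinearMap.prodMap D (D' ∘ₗ π)


section Aux

lemma zmod2_cases : ∀ g : ZMod 2, g = 0 ∨ g = 1 := by decide

lemma sgn_sq (𝔽 : Type*) [Field 𝔽] (g : ZMod 2) : sgn 𝔽 g * sgn 𝔽 g = 1 := by
  rcases zmod2_cases g with rfl | rfl <;> simp [sgn]

lemma sgn_add (𝔽 : Type*) [Field 𝔽] (g h : ZMod 2) :
    sgn 𝔽 (g + h) = sgn 𝔽 g * sgn 𝔽 h := by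
  rcases zmod2_cases g with rfl | rfl <;> rcases zmod2_cases h with rfl | rfl <;>
    simp [sgn, show ((1:ZMod 2) + 1) = 0 from by decide]

lemma sgn_zero (𝔽 : Type*) [Field 𝔽] : sgn 𝔽 0 = 1 := by simp [sgn]

end Aux


section Aux2

variable {m : ℕ}

lemma comm_pow (D α : N →ₗ[𝔽] N) (h : D ∘ₗ α = α ∘ₗ D) :
    ∀ (t : ℕ) (v : N), D ((α ^ t) v) = (α ^ t) (D v) := by
  intro t
  induction t with
  | zero => intro v; simp
  | succ n ih =>
      intro v
      have hv : D (α v) = α (D v) := LinearMap.congr_fun h v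
      rw [pow_succ, Module.End.mul_apply, ih, hv, ← Module.End.mul_apply, ← pow_succ]

lemma pow_apply_mem (gr : ZMod 2 → Submodule 𝔽 N) (α : N →ₗ[𝔽] N)
    (hα : ∀ g : ZMod 2, ∀ x ∈ gr g, α x ∈ gr g) :
    ∀ (t : ℕ) (g : ZMod 2) (v : N), v ∈ gr g → (α ^ t) v ∈ gr g := by
  intro t
  induction t with
  | zero => intro g v hv; simpa using hv
  | succ n ih =>
      intro g v hv
      rw [pow_succ', Module.End.mul_apply]
      exact hα g _ (ih g v hv)

lemma psum_zero (d : Fin (m + 1) → ZMod 2) : psum d 0 = 0 := by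
  unfold psum
  have : Finset.univ.filter (fun j => j < (0 : Fin (m + 1))) = ∅ := by
    ext j; simp
  rw [this, Finset.sum_empty]

set_option maxHeartbeats 1600000 in
lemma qcent_key (gr : ZMod 2 → Submodule 𝔽 N)
    (br : MultilinearMap 𝔽 (fun _ : Fin (m + 1) => N) N) (α : N →ₗ[𝔽] N)
    (hαe : ∀ g : ZMod 2, ∀ x ∈ gr g, α x ∈ gr g)
    (k' s' t : ℕ) (ht : t = k' + s') (ξ' η' : ZMod 2) (D' E' : N →ₗ[𝔽] N)
    (hD' : IsQCent gr br α k' ξ' D') (hE' : IsQCent gr br α s' η' E')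
    (d : Fin (m + 1) → ZMod 2) (x : Fin (m + 1) → N) (hx : ∀ i, x i ∈ gr (d i))
    (i : Fin (m + 1)) (hi : i ≠ 0) :
    br (Function.update (fun j => (α ^ t) (x j)) 0 (D' (E' (x 0)))) =
      (sgn 𝔽 (ξ' * η') * sgn 𝔽 ((ξ' + η') * psum d i)) •
        br (Function.update (fun j => (α ^ t) (x j)) i (E' (D' (x i)))) := by
  obtain ⟨hD'h, hD'a, hD'q⟩ := hD'
  obtain ⟨hE'h, hE'a, hE'q⟩ := hE'
  have hD'p := comm_pow D' α hD'a
  have hE'p := comm_pow E' α hE'a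
  subst ht
  set y : Fin (m + 1) → N := Function.update (fun j => (α ^ s') (x j)) 0 (E' (x 0)) with hy
  set d' : Fin (m + 1) → ZMod 2 := Function.update d 0 (d 0 + η') with hd'
  have hygr : ∀ j, y j ∈ gr (d' j) := by
    intro j
    rcases eq_or_ne j 0 with rfl | hj
    · rw [hy, hd', Function.update_self, Function.update_self]
      exact hE'h (d 0) (x 0) (hx 0)
    · rw [hy, hd', Function.update_of_ne hj, Function.update_of_ne hj]
      exact pow_apply_mem gr α hαe s' (d j) (x j) (hx j)
  have step1 := hD'q d' y hygr i
  set u : Fin (m + 1) → N := Function.update (fun j => (α ^ k') (x j)) i (D' (x i)) with hu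
  set du : Fin (m + 1) → ZMod 2 := Function.update d i (d i + ξ') with hdu
  have hugr : ∀ j, u j ∈ gr (du j) := by
    intro j
    rcases eq_or_ne j i with rfl | hj
    · rw [hu, hdu, Function.update_self, Function.update_self]
      exact hD'h (d j) (x j) (hx j)
    · rw [hu, hdu, Function.update_of_ne hj, Function.update_of_ne hj]
      exact pow_apply_mem gr α hαe k' (d j) (x j) (hx j)
  have step2 := hE'q du u hugr i
  have e1 : Function.update (fun j => (α ^ k') (y j)) 0 (D' (y 0)) =
      Function.update (fun j => (α ^ (k' + s')) (x j)) 0 (D' (E' (x 0))) := by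
    funext j
    rcases eq_or_ne j 0 with rfl | hj
    · rw [Function.update_self, Function.update_self, hy, Function.update_self]
    · rw [Function.update_of_ne hj, Function.update_of_ne hj, hy,
        Function.update_of_ne hj, pow_add, Module.End.mul_apply]
  have e2 : Function.update (fun j => (α ^ k') (y j)) i (D' (y i)) =
      Function.update (fun j => (α ^ s') (u j)) 0 (E' (u 0)) := by
    funext j
    rcases eq_or_ne j i with rfl | hji
    · rw [Function.update_self, Function.update_of_ne hi, hy, hu,
        Function.update_of_ne hi, Function.update_self, hD'p]
    · rcases eq_or_ne j 0 with rfl | hj0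
      · rw [Function.update_of_ne hji, Function.update_self, hy, hu,
          Function.update_self, Function.update_of_ne (Ne.symm hi), hE'p]
      · rw [Function.update_of_ne hji, Function.update_of_ne hj0, hy, hu,
          Function.update_of_ne hj0, Function.update_of_ne hji,
          ← Module.End.mul_apply, ← Module.End.mul_apply, ← pow_add, ← pow_add,
          Nat.add_comm k' s']
  have e3 : Function.update (fun j => (α ^ s') (u j)) i (E' (u i)) =
      Function.update (fun j => (α ^ (k' + s')) (x j)) i (E' (D' (x i))) := by
    funext j
    rcases eq_or_ne j i with rfl | hji
    · rw [Function.update_self, Function.update_self, hu, Function.update_self]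
    · rw [Function.update_of_ne hji, Function.update_of_ne hji, hu,
        Function.update_of_ne hji, ← Module.End.mul_apply, ← pow_add,
        Nat.add_comm s' k']
  have hp1 : psum d' i = psum d i + η' := by
    have h0i : (0 : Fin (m + 1)) ∈ Finset.univ.filter (fun j => j < i) := by
      simp [Fin.pos_of_ne_zero hi]
    rw [hd']
    unfold psum
    rw [Finset.sum_update_of_mem h0i, ← Finset.add_sum_erase _ d h0i]
    rw [add_right_comm, Finset.erase_eq]
  have hp2 : psum du i = psum d i := by
    rw [hdu]
    unfold psum
    refine Finset.sum_congr rfl fun j hj => ?_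
    have hji : j ≠ i := by
      have : j < i := by simpa using hj
      exact ne_of_lt this
    rw [Function.update_of_ne hji]
  have hcoef : sgn 𝔽 (ξ' * (psum d i + η')) * sgn 𝔽 (η' * psum d i) =
      sgn 𝔽 (ξ' * η') * sgn 𝔽 ((ξ' + η') * psum d i) := by
    rw [mul_add, add_mul, sgn_add, sgn_add]
    ring
  rw [e1, e2] at step1
  rw [e3] at step2
  rw [step2, smul_smul, hp1, hp2, hcoef] at step1
  exact step1

end Aux2

set_option maxHeartbeats 2000000 in
/-- Proposition 3.8(2): `QC(N)` is closed under the Jordan product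
`D • E = ½(DE + (-1)^{|D||E|} ED)`, and consequently `(QC(N), •, α̃)` is a Hom-Jordan
superalgebra (supercommutativity and the super-Hom-Jordan identity hold on `QC(N)`). -/
theorem qcent_hom_jordan {𝔽 : Type*} [Field 𝔽] [CharZero 𝔽]
    {N : Type*} [AddCommGroup N] [Module 𝔽 N] {m : ℕ} (hm : 1 ≤ m)
    (gr : ZMod 2 → Submodule 𝔽 N) (br : MultilinearMap 𝔽 (fun _ : Fin (m + 1) => N) N)
    (α : N →ₗ[𝔽] N) (H : IsMNHLS gr br α) :
    (∀ (k s : ℕ) (ξ η : ZMod 2) (D E : N →ₗ[𝔽] N),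
      IsQCent gr br α k ξ D → IsQCent gr br α s η E →
        IsQCent gr br α (k + s) (ξ + η) (jprod 𝔽 ξ η D E)) ∧
    (∀ (k s : ℕ) (ξ η : ZMod 2) (D E : N →ₗ[𝔽] N),
      IsQCent gr br α k ξ D → IsQCent gr br α s η E →
        jprod 𝔽 ξ η D E = sgn 𝔽 (ξ * η) • jprod 𝔽 η ξ E D) ∧
    (∀ (k₁ k₂ k₃ k₄ : ℕ) (ξ η θ γ : ZMod 2) (Dξ Dη Dθ Dγ : N →ₗ[𝔽] N),
      IsQCent gr br α k₁ ξ Dξ → IsQCent gr br α k₂ η Dη →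
      IsQCent gr br α k₃ θ Dθ → IsQCent gr br α k₄ γ Dγ →
        sgn 𝔽 (γ * (ξ + θ)) •
            jassoc 𝔽 α (ξ + η) θ γ (jprod 𝔽 ξ η Dξ Dη) (α ∘ₗ Dθ) (α ∘ₗ Dγ) +
          sgn 𝔽 (ξ * (η + θ)) •
            jassoc 𝔽 α (η + γ) θ ξ (jprod 𝔽 η γ Dη Dγ) (α ∘ₗ Dθ) (α ∘ₗ Dξ) +
          sgn 𝔽 (η * (γ + θ)) •
            jassoc 𝔽 α (γ + ξ) θ η (jprod 𝔽 γ ξ Dγ Dξ) (α ∘ₗ Dθ) (α ∘ₗ Dη) = 0) := by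
  refine ⟨?_, ?_, ?_⟩
  · -- Part 1: closure under the Jordan product
    intro k s ξ η D E hD hE
    have hDh := hD.1
    have hEh := hE.1
    have hDa := hD.2.1
    have hEa := hE.2.1
    refine ⟨?_, ?_, ?_⟩
    · -- homogeneity
      intro g v hv
      have h1 : D (E v) ∈ gr (g + (ξ + η)) := by
        have h := hDh (g + η) (E v) (hEh g v hv)
        rwa [add_assoc, add_comm η ξ] at h
      have h2 : E (D v) ∈ gr (g + (ξ + η)) := by
        have h := hEh (g + ξ) (D v) (hDh g v hv)
        rwa [add_assoc] at h
      simp only [jprod, LinearMap.smul_apply, LinearMap.add_apply, LinearMap.comp_apply]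
      exact Submodule.smul_mem _ _ (Submodule.add_mem _ h1 (Submodule.smul_mem _ _ h2))
    · -- commutes with α
      ext v
      have h1 : ∀ w, D (α w) = α (D w) := fun w => LinearMap.congr_fun hDa w
      have h2 : ∀ w, E (α w) = α (E w) := fun w => LinearMap.congr_fun hEa w
      simp [jprod, h1, h2]
    · -- the quasicentroid identity
      intro d x hx i
      rcases eq_or_ne i 0 with rfl | hi
      · rw [psum_zero, mul_zero, sgn_zero, one_smul]
      · simp only [jprod, LinearMap.smul_apply, LinearMap.add_apply, LinearMap.comp_apply,
          MultilinearMap.map_update_smul, MultilinearMap.map_update_add]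
        rw [qcent_key gr br α H.alpha_even k s (k + s) rfl ξ η D E hD hE d x hx i hi,
          qcent_key gr br α H.alpha_even s k (k + s) (Nat.add_comm k s) η ξ E D hE hD d x hx i hi,
          mul_comm η ξ, add_comm η ξ]
        match_scalars <;>
          first
            | ring1
            | linear_combination ((2:𝔽)⁻¹ * sgn 𝔽 ((ξ + η) * psum d i)) * sgn_sq 𝔽 (ξ * η)
  · -- Part 2: supercommutativity
    intro k s ξ η D E _ _
    rcases zmod2_cases ξ with rfl | rfl <;> rcases zmod2_cases η with rfl | rfl <;>
      · ext v
        simp [jprod, sgn, show ((1:ZMod 2) * 1 ≠ 0) from by decide]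
        module
  · -- Part 3: super Hom-Jordan identity
    intro k₁ k₂ k₃ k₄ ξ η θ γ Dξ Dη Dθ Dγ hξ hη hθ hγ
    have h1 : ∀ v, α (Dξ v) = Dξ (α v) := fun v => (LinearMap.congr_fun hξ.2.1 v).symm
    have h2 : ∀ v, α (Dη v) = Dη (α v) := fun v => (LinearMap.congr_fun hη.2.1 v).symm
    have h3 : ∀ v, α (Dθ v) = Dθ (α v) := fun v => (LinearMap.congr_fun hθ.2.1 v).symm
    have h4 : ∀ v, α (Dγ v) = Dγ (α v) := fun v => (LinearMap.congr_fun hγ.2.1 v).symm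
    clear hξ hη hθ hγ
    rcases zmod2_cases ξ with rfl | rfl <;> rcases zmod2_cases η with rfl | rfl <;>
      rcases zmod2_cases θ with rfl | rfl <;> rcases zmod2_cases γ with rfl | rfl <;>
      · ext v
        simp (config := {decide := true}) only [jassoc, jprod, sgn, LinearMap.add_apply,
          LinearMap.sub_apply, LinearMap.smul_apply, LinearMap.comp_apply,
          LinearMap.zero_apply, map_add, map_smul, h1, h2, h3, h4,
          if_true, if_false, ite_true, ite_false]
        module
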